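/- arXiv:2202.07165 — 3 statements merged into one kernel-verified Lean document; each statement's English description precedes it below -/
import Mathlib

section
/- Let d ≥ 1, let M₀ ≥ d, and let g be a finite list of pairs (index, value) ∈ ℕ × ℝ with every index < d. Let g₁ = g ++ [(0,0), (1,0), …, (d−1,0)], let l₁ be any permutation of g₁ that is non-decreasing in the first component, let l₂ = F(l₁) be the result of oblivious folding with dummy index M₀, and let l₃ be any permutation of l₂ that is non-decreasing in the first component. Then for every j < d the j-th entry of l₃ equals (j, ∑_{(i,v) ∈ g, i = j} v); in particular, the Advanced algorithm outputs exactly the per-index aggregate of the input gradients g. -/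
/-- The scan underlying oblivious folding with dummy index `M0`: `acc` is the
current accumulator and the list argument is the part of the input not yet
processed.  If the next entry has the same index as the accumulator, output a
dummy `(M0, 0)` and fold the value into the accumulator; otherwise output the
accumulator and restart from the next entry.  The accumulator is emitted at
the very end. -/
def obliviousFoldAux (M0 : ℕ) : List (ℕ × ℝ) → (ℕ × ℝ) → List (ℕ × ℝ)
  | [], acc => [acc]
  | x :: xs, acc =>
      if x.1 = acc.1 then (M0, 0) :: obliviousFoldAux M0 xs (acc.1, acc.2 + x.2)
      else acc :: obliviousFoldAux M0 xs x

/-- Oblivious folding `F` with dummy index `M0`. -/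
def F (M0 : ℕ) : List (ℕ × ℝ) → List (ℕ × ℝ)
  | [] => []
  | x :: xs => obliviousFoldAux M0 xs x

/-!
The input `l₁` of the fold is sorted, so the scan meets each run of equal indices consecutively:
it emits a dummy for every element of the run but the last and then the run's total. Hence for
each index `j ≠ M₀` the entries of `F l₁` with index `j` are exactly one pair `(j, total)` if `j`
occurs in `l₁`, and none otherwise. The padding makes every `j < d` occur in `l₁` without changing
its total, so each `j < d` occurs exactly once among the indices of `l₃`; a sorted list of
naturals containing each of `0, …, d - 1` exactly once begins with `0, 1, …, d - 1`, so the
`j`-th entry of `l₃` is the unique pair with index `j`.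
-/

def indexSum (l : List (ℕ × ℝ)) (j : ℕ) : ℝ :=
  ((l.filter fun p => p.1 = j).map Prod.snd).sum

theorem indexSum_append (l l' : List (ℕ × ℝ)) (j : ℕ) :
    indexSum (l ++ l') j = indexSum l j + indexSum l' j := by
  simp [indexSum, List.filter_append]

theorem List.Perm.indexSum_eq {l l' : List (ℕ × ℝ)} (h : l.Perm l') (j : ℕ) :
    indexSum l j = indexSum l' j :=
  ((h.filter _).map _).sum_eq

theorem indexSum_map_zero (s : List ℕ) (j : ℕ) :
    indexSum (s.map fun i => (i, 0)) j = 0 := by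
  simp [indexSum, List.filter_map, Function.comp_def]

theorem List.count_map_fst {α β : Type*} [DecidableEq α] (l : List (α × β)) (a : α) :
    (l.map Prod.fst).count a = (l.filter fun p => p.1 = a).length := by
  rw [List.count, List.countP_map, List.countP_eq_length_filter]
  rfl

theorem List.take_eq_range_of_pairwise_le {L : List ℕ} {d : ℕ} (hs : L.Pairwise (· ≤ ·))
    (hc : ∀ n < d, L.count n = 1) : L.take d = List.range d := by
  have hlow : L.filter (· < d) = List.range d := by
    refine List.Perm.eq_of_pairwise (fun a b _ _ => le_antisymm) (hs.filter _)
      List.pairwise_le_range (List.perm_iff_count.2 fun n => ?_)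
    rw [List.count_range]
    split_ifs with hn
    · rw [List.count_filter (by simpa), hc n hn]
    · exact List.count_eq_zero.2 (by simp [hn])
  have hsplit := (List.filter_append_perm (· < d) L).eq_of_pairwise
    (fun a b _ _ => le_antisymm) (List.pairwise_append.2 ⟨hs.filter _, hs.filter _,
      fun a ha b hb => by simp at ha hb; omega⟩) hs
  rw [← hsplit, hlow, List.take_left' List.length_range]

theorem List.getD_eq_of_filter_fst_eq_singleton {β : Type*} {l : List (ℕ × β)} {d : ℕ}
    {v : ℕ → β} (hs : (l.map Prod.fst).Pairwise (· ≤ ·))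
    (hl : ∀ n < d, l.filter (fun p => p.1 = n) = [(n, v n)]) (x : ℕ × β) :
    ∀ j < d, l.getD j x = (j, v j) := by
  have htake : (l.map Prod.fst).take d = List.range d :=
    List.take_eq_range_of_pairwise_le hs
      fun n hn => by rw [List.count_map_fst, hl n hn, List.length_singleton]
  intro j hj
  have hlen : j < l.length := by
    have := congrArg List.length htake
    simp only [List.length_take, List.length_map, List.length_range] at this
    omega
  have hfst : l[j].1 = j := by
    have := congrArg (·[j]?) htake
    simpa [List.getElem?_take, hj, hlen] using this
  have hmem : l[j] ∈ l.filter (fun p => p.1 = j) :=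
    List.mem_filter.2 ⟨l.getElem_mem hlen, by simp [hfst]⟩
  rw [List.getD_eq_getElem _ _ hlen, ← List.mem_singleton]
  exact hl j hj ▸ hmem

theorem filter_obliviousFoldAux {M0 j : ℕ} (hj : j ≠ M0) (xs : List (ℕ × ℝ)) (acc : ℕ × ℝ)
    (hs : (acc :: xs).Pairwise fun a b => a.1 ≤ b.1) :
    (obliviousFoldAux M0 xs acc).filter (fun p => p.1 = j) =
      if j ∈ (acc :: xs).map Prod.fst then [(j, indexSum (acc :: xs) j)] else [] := by
  induction xs generalizing acc with
  | nil =>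
    by_cases h : acc.1 = j
    · subst h; simp [obliviousFoldAux, indexSum]
    · simp [obliviousFoldAux, h, Ne.symm h]
  | cons x t ih =>
    obtain ⟨hacc, hx, ht⟩ : (∀ y ∈ x :: t, acc.1 ≤ y.1) ∧ (∀ y ∈ t, x.1 ≤ y.1) ∧ t.Pairwise _ := by
      simpa using hs
    by_cases hxa : x.1 = acc.1
    · rw [obliviousFoldAux, if_pos hxa, List.filter_cons_of_neg (by simpa using hj.symm),
        ih _ (List.pairwise_cons.2 ⟨fun y hy => hxa ▸ hx y hy, ht⟩)]
      by_cases h : acc.1 = j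
      · subst h; simp [indexSum, hxa, add_assoc]
      · simp only [indexSum, List.map_cons, List.mem_cons, List.filter_cons, hxa, h, Ne.symm h,
          false_or]
        simp
    · rw [obliviousFoldAux, if_neg hxa, List.filter_cons, ih _ (List.pairwise_cons.2 ⟨hx, ht⟩)]
      by_cases h : acc.1 = j
      · subst h
        have hlt : ∀ y ∈ x :: t, acc.1 < y.1 := fun y hy =>
          (lt_of_le_of_ne (hacc x (by simp)) (Ne.symm hxa)).trans_le
            (by rcases List.mem_cons.1 hy with rfl | hy; exacts [le_rfl, hx y hy])
        have hnot : acc.1 ∉ (x :: t).map Prod.fst := fun hm => by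
          obtain ⟨y, hy, hy1⟩ := List.mem_map.1 hm; exact (hlt y hy).ne' hy1
        have hnil : (x :: t).filter (fun p => p.1 = acc.1) = [] :=
          List.filter_eq_nil_iff.2 fun y hy => by simpa using (hlt y hy).ne'
        rw [if_neg hnot, if_pos (List.mem_map_of_mem List.mem_cons_self)]
        simp [indexSum, hnil]
      · simp only [indexSum, List.map_cons, List.mem_cons, List.filter_cons, h, Ne.symm h, false_or]
        simp

theorem filter_F {M0 j : ℕ} (hj : j ≠ M0) (l : List (ℕ × ℝ))
    (hs : l.Pairwise fun a b => a.1 ≤ b.1) :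
    (F M0 l).filter (fun p => p.1 = j) =
      if j ∈ l.map Prod.fst then [(j, indexSum l j)] else [] := by
  cases l with
  | nil => rfl
  | cons acc xs => exact filter_obliviousFoldAux hj xs acc hs

theorem advanced_correct_general (d M0 : ℕ) (hM0 : d ≤ M0)
    (g : List (ℕ × ℝ))
    (g1 : List (ℕ × ℝ)) (hg1 : g1 = g ++ (List.range d).map fun j => ((j : ℕ), (0 : ℝ)))
    (l1 : List (ℕ × ℝ)) (hl1p : l1.Perm g1)
    (hl1s : l1.Pairwise fun a b => a.1 ≤ b.1)
    (l2 : List (ℕ × ℝ)) (hl2 : l2 = F M0 l1)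
    (l3 : List (ℕ × ℝ)) (hl3p : l3.Perm l2)
    (hl3s : l3.Pairwise fun a b => a.1 ≤ b.1) :
    ∀ j < d,
      l3.getD j ((0 : ℕ), (0 : ℝ)) =
        ((j : ℕ), ((g.filter fun p => p.1 = j).map Prod.snd).sum) := by
  subst hg1 hl2
  have hl3_filter : ∀ n < d, l3.filter (fun p => p.1 = n) = [(n, indexSum g n)] := by
    intro n hn
    have hmem : n ∈ l1.map Prod.fst :=
      List.mem_map.2 ⟨(n, 0), hl1p.mem_iff.2 (by simpa using Or.inr hn), rfl⟩
    have hsum : indexSum l1 n = indexSum g n := by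
      rw [hl1p.indexSum_eq, indexSum_append, indexSum_map_zero, add_zero]
    have hl2_filter := filter_F (M0 := M0) (j := n) (by omega) l1 hl1s
    rw [if_pos hmem, hsum] at hl2_filter
    exact List.perm_singleton.1 (hl2_filter ▸ hl3p.filter _)
  exact List.getD_eq_of_filter_fst_eq_singleton (hl3s.map _ fun _ _ => id) hl3_filter _

/-- Correctness of the Advanced aggregation algorithm: starting from input
gradients `g` whose indices are all `< d`, after initialization
(`g₁ = g ++ [(0,0), …, (d−1,0)]`), a sort by index, oblivious folding, and a
second sort by index, the `j`-th entry of the result is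
`(j, ∑_{(i,v) ∈ g, i = j} v)` for every `j < d`. -/
theorem advanced_correct (d M0 : ℕ) (hd : 1 ≤ d) (hM0 : d ≤ M0)
    (g : List (ℕ × ℝ)) (hg : ∀ p ∈ g, p.1 < d)
    (g1 : List (ℕ × ℝ)) (hg1 : g1 = g ++ (List.range d).map fun j => ((j : ℕ), (0 : ℝ)))
    (l1 : List (ℕ × ℝ)) (hl1p : l1.Perm g1)
    (hl1s : l1.Pairwise fun a b => a.1 ≤ b.1)
    (l2 : List (ℕ × ℝ)) (hl2 : l2 = F M0 l1)
    (l3 : List (ℕ × ℝ)) (hl3p : l3.Perm l2)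
    (hl3s : l3.Pairwise fun a b => a.1 ≤ b.1) :
    ∀ j < d,
      l3.getD j ((0 : ℕ), (0 : ℝ)) =
        ((j : ℕ), ((g.filter fun p => p.1 = j).map Prod.snd).sum) :=
  advanced_correct_general d M0 hM0 g g1 hg1 l1 hl1p hl1s l2 hl2 l3 hl3p hl3s
end

section
/- Let M₀ ∈ ℕ and let l be a nonempty list of pairs in ℕ × ℝ that is non-decreasing in the first component and whose first components are all strictly less than M₀. Then F(l) has the same length as l and satisfies: for every index i occurring as a first component of an entry of l, the entry of F(l) at the position of the last occurrence of i in l equals (i, ∑_{(i',v) ∈ l, i' = i} v), and every other entry of F(l) equals (M₀, 0). -/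
/-!
The accumulator of the scan always carries the index of the last entry read, so `F` emits the
dummy exactly at positions followed by an entry with the same index; when the index changes it
emits the accumulator, which holds the sum over the run just finished. For a sorted list the runs
are the classes of equal indices, and a position is the end of its run exactly when it is the last
occurrence of its index.
-/

def keySum (l : List (ℕ × ℝ)) (i : ℕ) : ℝ :=
  ((l.filter fun e => e.1 = i).map Prod.snd).sum

theorem keySum_cons_of_ne {a : ℕ × ℝ} {i : ℕ} (h : a.1 ≠ i) (l : List (ℕ × ℝ)) :
    keySum (a :: l) i = keySum l i := by
  simp [keySum, h]

theorem keySum_cons_self (a : ℕ × ℝ) (l : List (ℕ × ℝ)) :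
    keySum (a :: l) a.1 = a.2 + keySum l a.1 := by
  simp [keySum]

theorem keySum_eq_zero {l : List (ℕ × ℝ)} {i : ℕ} (h : ∀ e ∈ l, e.1 ≠ i) : keySum l i = 0 := by
  rw [keySum, List.filter_eq_nil_iff.mpr fun e he => by simpa using h e he]
  rfl

theorem keySum_merge {a b : ℕ × ℝ} (hab : b.1 = a.1) (l : List (ℕ × ℝ)) (i : ℕ) :
    keySum ((a.1, a.2 + b.2) :: l) i = keySum (a :: b :: l) i := by
  by_cases hi : a.1 = i
  · simp [keySum, hab, hi, add_assoc]
  · simp [keySum, hab, hi]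

theorem fst_getD_cons_of_fst_eq {a b : ℕ × ℝ} (h : a.1 = b.1) (l : List (ℕ × ℝ)) (d : ℕ × ℝ)
    (q : ℕ) : ((a :: l).getD q d).1 = ((b :: l).getD q d).1 := by
  cases q <;> simp [h]

theorem pairwise_cons_of_fst_eq {a b : ℕ × ℝ} (h : a.1 = b.1) {l : List (ℕ × ℝ)}
    (hs : (b :: l).Pairwise fun x y => x.1 ≤ y.1) : (a :: l).Pairwise fun x y => x.1 ≤ y.1 :=
  List.pairwise_cons.mpr ⟨fun _ he => h ▸ List.rel_of_pairwise_cons hs he, hs.tail⟩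

theorem apply_getD_succ_eq_of_pairwise {α β : Type*} [PartialOrder β] {f : α → β} {l : List α}
    (hs : l.Pairwise fun x y => f x ≤ f y) {p q : ℕ} (hpq : p < q) (hq : q < l.length) (d : α)
    (h : f (l.getD q d) = f (l.getD p d)) : f (l.getD (p + 1) d) = f (l.getD p d) := by
  have hle : ∀ {m n : ℕ}, m ≤ n → n < l.length → f (l.getD m d) ≤ f (l.getD n d) := by
    intro m n hmn hn
    rw [List.getD_eq_getElem _ _ (by omega), List.getD_eq_getElem _ _ hn]
    rcases hmn.lt_or_eq with hmn | rfl
    · exact List.pairwise_iff_getElem.mp hs m n (by omega) hn hmn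
    · exact le_rfl
  exact le_antisymm (h ▸ hle (Nat.succ_le_of_lt hpq) hq) (hle (Nat.le_succ p) (by omega))

section

variable (M0 : ℕ)

@[simp]
theorem length_obliviousFoldAux (xs : List (ℕ × ℝ)) (acc : ℕ × ℝ) :
    (obliviousFoldAux M0 xs acc).length = xs.length + 1 := by
  induction xs generalizing acc with
  | nil => rfl
  | cons x xs ih => unfold obliviousFoldAux; split <;> simp [ih]

@[simp]
theorem length_F (l : List (ℕ × ℝ)) : (F M0 l).length = l.length := by
  cases l <;> simp [F]

theorem F_singleton (a : ℕ × ℝ) : F M0 [a] = [a] := rfl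

theorem F_cons_cons_of_eq {a b : ℕ × ℝ} (h : b.1 = a.1) (l : List (ℕ × ℝ)) :
    F M0 (a :: b :: l) = (M0, 0) :: F M0 ((a.1, a.2 + b.2) :: l) := by
  simp [F, obliviousFoldAux, h]

theorem F_cons_cons_of_ne {a b : ℕ × ℝ} (h : b.1 ≠ a.1) (l : List (ℕ × ℝ)) :
    F M0 (a :: b :: l) = a :: F M0 (b :: l) := by
  simp [F, obliviousFoldAux, h]

theorem getD_F_of_fst_getD_succ_eq {l : List (ℕ × ℝ)} {p : ℕ} (hp : p + 1 < l.length)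
    (d : ℕ × ℝ) (h : (l.getD (p + 1) d).1 = (l.getD p d).1) : (F M0 l).getD p d = (M0, 0) := by
  obtain _ | ⟨a, t⟩ := l
  · simp at hp
  induction t generalizing a p with
  | nil => simp at hp
  | cons b t ih =>
    by_cases hab : b.1 = a.1
    · rw [F_cons_cons_of_eq M0 hab]
      cases p with
      | zero => rfl
      | succ p =>
        refine ih (a.1, a.2 + b.2) (by simpa using hp) ?_
        rwa [fst_getD_cons_of_fst_eq (a := (a.1, a.2 + b.2)) hab.symm,
          fst_getD_cons_of_fst_eq (a := (a.1, a.2 + b.2)) hab.symm]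
    · rw [F_cons_cons_of_ne M0 hab]
      cases p with
      | zero => exact absurd h hab
      | succ p => exact ih b (by simpa using hp) h

theorem getD_F_of_last {l : List (ℕ × ℝ)} (hs : l.Pairwise fun x y => x.1 ≤ y.1) {p : ℕ}
    (hp : p < l.length) (d : ℕ × ℝ)
    (hlast : ∀ q, p < q → q < l.length → (l.getD q d).1 ≠ (l.getD p d).1) :
    (F M0 l).getD p d = ((l.getD p d).1, keySum l (l.getD p d).1) := by
  obtain _ | ⟨a, t⟩ := l
  · simp at hp
  induction t generalizing a p with
  | nil =>
    obtain rfl : p = 0 := by simpa using hp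
    simp [F_singleton, keySum]
  | cons b t ih =>
    by_cases hab : b.1 = a.1
    · cases p with
      | zero => exact absurd hab (hlast 1 one_pos (by simp))
      | succ p =>
        have hkey : ∀ q, (((a.1, a.2 + b.2) :: t).getD q d).1 = ((b :: t).getD q d).1 :=
          fst_getD_cons_of_fst_eq (a := (a.1, a.2 + b.2)) hab.symm t d
        have hs' := pairwise_cons_of_fst_eq (a := (a.1, a.2 + b.2)) hab.symm hs.tail
        rw [F_cons_cons_of_eq M0 hab, List.getD_cons_succ, List.getD_cons_succ,
          ← keySum_merge hab, ← hkey, ih _ hs' (by simpa using hp) fun q hpq hq => ?_]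
        rw [hkey, hkey]
        exact hlast (q + 1) (by omega) (by simpa using hq)
    · have hlt : ∀ e ∈ b :: t, a.1 < e.1 := by
        have hab' : a.1 < b.1 := (List.rel_of_pairwise_cons hs List.mem_cons_self).lt_of_ne' hab
        rintro _ (_ | ⟨_, he⟩)
        · exact hab'
        · exact hab'.trans_le (List.rel_of_pairwise_cons hs.tail he)
      rw [F_cons_cons_of_ne M0 hab]
      cases p with
      | zero =>
        simp [keySum_cons_self, keySum_eq_zero fun e he => (hlt e he).ne']
      | succ p =>
        have hp' : p < (b :: t).length := by simpa using hp
        have hmem : (b :: t).getD p d ∈ b :: t := by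
          rw [List.getD_eq_getElem _ _ hp']; exact List.getElem_mem hp'
        rw [List.getD_cons_succ, List.getD_cons_succ,
          keySum_cons_of_ne (hlt _ hmem).ne, ih b hs.tail hp' fun q hpq hq => ?_]
        exact hlast (q + 1) (by omega) (by simpa using hq)

end

theorem oblivious_folding_correct_general (M0 : ℕ) (l : List (ℕ × ℝ))
    (hsorted : l.Pairwise fun a b => a.1 ≤ b.1) :
    (F M0 l).length = l.length ∧
      (∀ (i : ℕ) (p : ℕ), p < l.length →
        (l.getD p ((0 : ℕ), (0 : ℝ))).1 = i →
        (∀ q, p < q → q < l.length → (l.getD q ((0 : ℕ), (0 : ℝ))).1 ≠ i) →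
        (F M0 l).getD p ((0 : ℕ), (0 : ℝ)) =
          (i, ((l.filter fun e => e.1 = i).map Prod.snd).sum)) ∧
      (∀ p : ℕ, p < l.length →
        (∃ q, p < q ∧ q < l.length ∧
          (l.getD q ((0 : ℕ), (0 : ℝ))).1 = (l.getD p ((0 : ℕ), (0 : ℝ))).1) →
        (F M0 l).getD p ((0 : ℕ), (0 : ℝ)) = ((M0 : ℕ), (0 : ℝ))) := by
  refine ⟨length_F M0 l, ?_, ?_⟩
  · rintro i p hp rfl hlast
    exact getD_F_of_last M0 hsorted hp _ hlast
  · rintro p hp ⟨q, hpq, hq, hkey⟩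
    exact getD_F_of_fst_getD_succ_eq M0 (by omega) _
      (apply_getD_succ_eq_of_pairwise hsorted hpq hq _ hkey)

/-- For a nonempty list `l` of pairs in `ℕ × ℝ`, non-decreasing in the first
component and with all first components `< M0`: `F(l)` has the same length as
`l`; at the position of the last occurrence of each index `i` occurring in
`l`, `F(l)` carries `(i, ∑_{(i',v) ∈ l, i' = i} v)`; and every other entry of
`F(l)` equals `(M0, 0)`. -/
theorem oblivious_folding_correct (M0 : ℕ) (l : List (ℕ × ℝ))
    (hne : l ≠ [])
    (hsorted : l.Pairwise fun a b => a.1 ≤ b.1)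
    (hlt : ∀ p ∈ l, p.1 < M0) :
    (F M0 l).length = l.length ∧
      (∀ (i : ℕ) (p : ℕ), p < l.length →
        (l.getD p ((0 : ℕ), (0 : ℝ))).1 = i →
        (∀ q, p < q → q < l.length → (l.getD q ((0 : ℕ), (0 : ℝ))).1 ≠ i) →
        (F M0 l).getD p ((0 : ℕ), (0 : ℝ)) =
          (i, ((l.filter fun e => e.1 = i).map Prod.snd).sum)) ∧
      (∀ p : ℕ, p < l.length →
        (∃ q, p < q ∧ q < l.length ∧
          (l.getD q ((0 : ℕ), (0 : ℝ))).1 = (l.getD p ((0 : ℕ), (0 : ℝ))).1) →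
        (F M0 l).getD p ((0 : ℕ), (0 : ℝ)) = ((M0 : ℕ), (0 : ℝ))) :=
  oblivious_folding_correct_general M0 l hsorted
end

section
/- For every m ∈ ℕ, every linearly ordered type α, and every list l over α of length 2^m, applying the compare-exchange operations of Batcher's bitonic sorting network on 2^m positions to l yields a list that is a permutation of l and is sorted in non-decreasing order; moreover, the sequence of position pairs at which compare-exchanges are performed depends only on m and not on the contents of l. -/
/-- The compare-exchange operations of Batcher's bitonic sorting network on
`2^m` positions: for stage `k = 1, …, m` and `j = k−1` down to `0`, for every
`i ∈ {0, …, 2^m − 1}` whose `j`-th binary bit is `0`, compare-exchange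
positions `i` and `i + 2^j`, ascending iff the `k`-th binary bit of `i` is
`0`.  Each element is `(i, i + 2^j, ascending?)`. -/
def bitonicPairs (m : ℕ) : List (ℕ × ℕ × Bool) :=
  (List.range m).flatMap fun k' =>
    let k := k' + 1
    ((List.range k).reverse).flatMap fun j =>
      ((List.range (2 ^ m)).filter fun i => !i.testBit j).map fun i =>
        (i, i + 2 ^ j, !i.testBit k)

/-- A single compare-exchange on a list: places the entries at the two given
positions in ascending order if the flag is `true`, descending otherwise. -/
def cexList {α : Type*} [LinearOrder α] (l : List α) (op : ℕ × ℕ × Bool) : List α :=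
  match l[op.1]?, l[op.2.1]? with
  | some a, some b =>
      let ok : Bool := if op.2.2 then decide (a ≤ b) else decide (b ≤ a)
      if ok then l else (l.set op.1 b).set op.2.1 a
  | _, _ => l

/-- Running Batcher's bitonic sorting network on a list, also recording the
sequence of position pairs at which compare-exchanges are performed. -/
def runNetwork {α : Type*} [LinearOrder α] (m : ℕ) (l : List α) :
    List α × List (ℕ × ℕ) :=
  List.foldl (fun s op => (cexList s.1 op, s.2 ++ [(op.1, op.2.1)]))
    (l, ([] : List (ℕ × ℕ))) (bitonicPairs m)

/-!
By the 0-1 principle (compare-exchange commutes with every monotone map, in particular with the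
threshold maps `α → Bool`) it suffices to sort Boolean sequences. After stage `K` the blocks of
size `2^K` are sorted, alternately ascending and descending, so every block of size `2^(K+1)` is
bitonic. A row of stage `K + 1` acts as a half-cleaner on each block it meets: a bitonic 0-1 block
splits into two bitonic halves, one of which is constant, so that every entry of one half lies
below every entry of the other. Hence after the rows `K, …, t` of that stage the blocks of size
`2^t` are bitonic and ordered among themselves, and after row `0` the blocks of size `2^(K+1)`
are sorted.
-/

namespace BitonicNetwork

lemma perm_set_set_of_ne {α : Type*} (l : List α) {p q : ℕ} (hp : p < l.length) (hq : q < l.length)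
    (hpq : p ≠ q) : ((l.set p l[q]).set q l[p]).Perm l := by
  have h := (Equiv.swap (⟨p, hp⟩ : Fin l.length) ⟨q, hq⟩).ofFn_comp_perm (fun i => l[i.1])
  rw [List.ofFn_getElem] at h
  refine List.Perm.trans (List.Perm.of_eq ?_) h
  refine List.ext_getElem (by simp) fun i h₁ h₂ => ?_
  simp only [List.getElem_set, List.getElem_ofFn, Function.comp_apply, Equiv.swap_apply_def,
    Fin.ext_iff]
  by_cases hiq : q = i
  · subst hiq; simp [Ne.symm hpq]
  by_cases hip : p = i
  · subst hip; simp [hiq]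
  · simp [hiq, hip, Ne.symm hiq, Ne.symm hip]

variable {α : Type*} [LinearOrder α]

def firstOf (asc : Bool) (a b : α) : α := if asc then min a b else max a b

lemma min_le_firstOf (asc : Bool) (a b : α) : min a b ≤ firstOf asc a b := by
  cases asc <;> simp [firstOf]

lemma firstOf_le_max (asc : Bool) (a b : α) : firstOf asc a b ≤ max a b := by
  cases asc <;> simp [firstOf]

lemma _root_.Monotone.map_firstOf {β : Type*} [LinearOrder β] {f : α → β} (hf : Monotone f)
    (asc : Bool) (a b : α) : f (firstOf asc a b) = firstOf asc (f a) (f b) := by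
  cases asc <;> simp [firstOf, hf.map_min, hf.map_max]

def cex (op : ℕ × ℕ × Bool) (v : ℕ → α) : ℕ → α := fun x =>
  if x = op.1 then firstOf op.2.2 (v op.1) (v op.2.1)
  else if x = op.2.1 then firstOf (!op.2.2) (v op.1) (v op.2.1)
  else v x

def runOps (ops : List (ℕ × ℕ × Bool)) (v : ℕ → α) : ℕ → α :=
  ops.foldl (fun v op => cex op v) v

@[simp] lemma runOps_cons (op : ℕ × ℕ × Bool) (ops : List (ℕ × ℕ × Bool)) (v : ℕ → α) :
    runOps (op :: ops) v = runOps ops (cex op v) := rfl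

@[simp] lemma runOps_append (ops ops' : List (ℕ × ℕ × Bool)) (v : ℕ → α) :
    runOps (ops ++ ops') v = runOps ops' (runOps ops v) := List.foldl_append ..

lemma _root_.Monotone.comp_cex {β : Type*} [LinearOrder β] {f : α → β} (hf : Monotone f)
    (op : ℕ × ℕ × Bool) (v : ℕ → α) : f ∘ cex op v = cex op (f ∘ v) := by
  funext x
  simp only [cex, Function.comp_apply]
  split_ifs <;> simp [hf.map_firstOf]

lemma _root_.Monotone.comp_runOps {β : Type*} [LinearOrder β] {f : α → β} (hf : Monotone f)
    (ops : List (ℕ × ℕ × Bool)) (v : ℕ → α) : f ∘ runOps ops v = runOps ops (f ∘ v) := by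
  induction ops generalizing v with
  | nil => rfl
  | cons op ops ih => rw [runOps_cons, runOps_cons, ih, hf.comp_cex]

lemma cex_apply_of_ne (op : ℕ × ℕ × Bool) (v : ℕ → α) {x : ℕ} (h₁ : x ≠ op.1)
    (h₂ : x ≠ op.2.1) : cex op v x = v x := by
  simp [cex, h₁, h₂]

lemma cex_apply_congr (op : ℕ × ℕ × Bool) {v w : ℕ → α} {x : ℕ} (hx : v x = w x)
    (h₁ : v op.1 = w op.1) (h₂ : v op.2.1 = w op.2.1) : cex op v x = cex op w x := by
  simp only [cex, hx, h₁, h₂]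

lemma runOps_apply_of_forall_ne (ops : List (ℕ × ℕ × Bool)) (v : ℕ → α) {x : ℕ}
    (h : ∀ op ∈ ops, x ≠ op.1 ∧ x ≠ op.2.1) : runOps ops v x = v x := by
  induction ops generalizing v with
  | nil => rfl
  | cons op ops ih =>
    obtain ⟨h₁, h₂⟩ := h op List.mem_cons_self
    rw [runOps_cons, ih _ fun o ho => h o (List.mem_cons_of_mem _ ho), cex_apply_of_ne op v h₁ h₂]

def DisjointOps (op op' : ℕ × ℕ × Bool) : Prop :=
  op.1 ≠ op'.1 ∧ op.1 ≠ op'.2.1 ∧ op.2.1 ≠ op'.1 ∧ op.2.1 ≠ op'.2.1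

lemma runOps_apply_of_pairwise_disjoint {ops : List (ℕ × ℕ × Bool)}
    (hops : ops.Pairwise DisjointOps) (v : ℕ → α) {op : ℕ × ℕ × Bool} (hop : op ∈ ops) :
    ∀ x, (x = op.1 ∨ x = op.2.1) → runOps ops v x = cex op v x := by
  induction ops generalizing v with
  | nil => simp at hop
  | cons o ops ih =>
    rw [List.pairwise_cons] at hops
    rintro x hx
    rw [runOps_cons]
    rcases List.mem_cons.mp hop with rfl | hop
    · refine runOps_apply_of_forall_ne ops _ fun o' ho' => ?_
      have := hops.1 o' ho'
      unfold DisjointOps at this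
      rcases hx with rfl | rfl <;> tauto
    · rw [ih hops.2 _ hop x hx]
      have hd := hops.1 op hop
      unfold DisjointOps at hd
      refine cex_apply_congr op ?_ ?_ ?_ <;> apply cex_apply_of_ne <;> rcases hx with rfl | rfl <;>
        tauto

lemma cexList_of_lt (l : List α) {op : ℕ × ℕ × Bool} (hp : op.1 < l.length)
    (hq : op.2.1 < l.length) :
    cexList l op =
      (l.set op.1 (firstOf op.2.2 l[op.1] l[op.2.1])).set op.2.1
        (firstOf (!op.2.2) l[op.1] l[op.2.1]) := by
  obtain ⟨p, q, asc⟩ := op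
  simp only at hp hq
  simp only [cexList, List.getElem?_eq_getElem hp, List.getElem?_eq_getElem hq]
  cases asc <;> simp only [firstOf, Bool.not_false, Bool.not_true, Bool.false_eq_true, if_true,
    if_false, decide_eq_true_eq]
  · by_cases h : l[q] ≤ l[p]
    · simp [h]
    · simp [h, le_of_not_ge h]
  · by_cases h : l[p] ≤ l[q]
    · simp [h]
    · simp [h, le_of_not_ge h]

lemma length_cexList (l : List α) (op : ℕ × ℕ × Bool) : (cexList l op).length = l.length := by
  by_cases h : op.1 < l.length ∧ op.2.1 < l.length
  · simp [cexList_of_lt l h.1 h.2]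
  · unfold cexList
    split
    · rename_i ha hb
      exact absurd ⟨(List.getElem?_eq_some_iff.mp ha).1, (List.getElem?_eq_some_iff.mp hb).1⟩ h
    · rfl

lemma getD_cexList (l : List α) (d : α) {op : ℕ × ℕ × Bool} (hp : op.1 < l.length)
    (hq : op.2.1 < l.length) (hne : op.1 ≠ op.2.1) (x : ℕ) :
    (cexList l op).getD x d = cex op (l.getD · d) x := by
  obtain ⟨p, q, asc⟩ := op
  simp only at hp hq hne
  rw [cexList_of_lt (op := (p, q, asc)) l hp hq]
  simp only [cex, List.getD_eq_getElem _ _ hp, List.getD_eq_getElem _ _ hq,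
    List.getD_eq_getElem?_getD, List.getElem?_set, List.length_set]
  by_cases hxq : x = q
  · subst hxq; simp [hq, Ne.symm hne]
  by_cases hxp : x = p
  · subst hxp; simp [hp, Ne.symm hxq]
  · simp [hxp, hxq, Ne.symm hxp, Ne.symm hxq]

lemma cexList_perm (l : List α) {op : ℕ × ℕ × Bool} (hne : op.1 ≠ op.2.1) :
    (cexList l op).Perm l := by
  by_cases h : op.1 < l.length ∧ op.2.1 < l.length
  · rw [cexList_of_lt l h.1 h.2]
    obtain ⟨p, q, asc⟩ := op
    have hswap := perm_set_set_of_ne l h.1 h.2 hne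
    by_cases hle : l[p]'h.1 ≤ l[q]'h.2 <;> cases asc <;> simp_all [firstOf, le_of_lt]
  · unfold cexList
    split
    · rename_i ha hb
      exact absurd ⟨(List.getElem?_eq_some_iff.mp ha).1, (List.getElem?_eq_some_iff.mp hb).1⟩ h
    · exact List.Perm.refl l

lemma length_foldl_cexList (ops : List (ℕ × ℕ × Bool)) (l : List α) :
    (ops.foldl cexList l).length = l.length := by
  induction ops generalizing l with
  | nil => rfl
  | cons op ops ih => rw [List.foldl_cons, ih, length_cexList]

lemma foldl_cexList_perm {ops : List (ℕ × ℕ × Bool)} (h : ∀ op ∈ ops, op.1 ≠ op.2.1)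
    (l : List α) : (ops.foldl cexList l).Perm l := by
  induction ops generalizing l with
  | nil => exact List.Perm.refl l
  | cons op ops ih =>
    exact (ih (fun o ho => h o (List.mem_cons_of_mem _ ho)) _).trans
      (cexList_perm l (h op List.mem_cons_self))

lemma getD_foldl_cexList {ops : List (ℕ × ℕ × Bool)} {l : List α}
    (h : ∀ op ∈ ops, op.1 < l.length ∧ op.2.1 < l.length ∧ op.1 ≠ op.2.1) (d : α) :
    (fun x => (ops.foldl cexList l).getD x d) = runOps ops (l.getD · d) := by
  induction ops generalizing l with
  | nil => rfl
  | cons op ops ih =>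
    obtain ⟨hp, hq, hne⟩ := h op List.mem_cons_self
    rw [List.foldl_cons, runOps_cons, ih fun o ho => by
      rw [length_cexList]; exact h o (List.mem_cons_of_mem _ ho)]
    exact congrArg _ (funext (getD_cexList l d hp hq hne))

lemma runNetwork_eq (m : ℕ) (l : List α) :
    runNetwork m l = ((bitonicPairs m).foldl cexList l,
      (bitonicPairs m).map fun op => (op.1, op.2.1)) := by
  suffices ∀ (ops : List (ℕ × ℕ × Bool)) (l : List α) (acc : List (ℕ × ℕ)),
      ops.foldl (fun s op => (cexList s.1 op, s.2 ++ [(op.1, op.2.1)])) (l, acc) =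
        (ops.foldl cexList l, acc ++ ops.map fun op => (op.1, op.2.1)) from this _ l []
  intro ops
  induction ops with
  | nil => simp
  | cons op ops ih => intro l acc; simp [ih]

def row (m j k : ℕ) : List (ℕ × ℕ × Bool) :=
  ((List.range (2 ^ m)).filter fun i => !i.testBit j).map fun i => (i, i + 2 ^ j, !i.testBit k)

def mergeRows (m k t : ℕ) : List (ℕ × ℕ × Bool) :=
  (List.range t).reverse.flatMap fun j => row m j k

def stages (m K : ℕ) : List (ℕ × ℕ × Bool) :=
  (List.range K).flatMap fun k => mergeRows m (k + 1) (k + 1)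

lemma bitonicPairs_eq_stages (m : ℕ) : bitonicPairs m = stages m m := rfl

lemma mergeRows_succ (m k t : ℕ) : mergeRows m k (t + 1) = row m t k ++ mergeRows m k t := by
  simp [mergeRows, List.range_succ]

lemma stages_succ (m K : ℕ) : stages m (K + 1) = stages m K ++ mergeRows m (K + 1) (K + 1) := by
  simp [stages, List.range_succ]

lemma two_pow_mul_add_div {s r : ℕ} (c : ℕ) (hr : r < 2 ^ s) : (2 ^ s * c + r) / 2 ^ s = c := by
  rw [Nat.mul_add_div (Nat.two_pow_pos s), Nat.div_eq_of_lt hr, add_zero]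

lemma testBit_two_pow_mul_add_of_le {s r K : ℕ} (c : ℕ) (hr : r < 2 ^ s) (hs : s ≤ K) :
    (2 ^ s * c + r).testBit K = c.testBit (K - s) := by
  rw [Nat.testBit_two_pow_mul_add _ hr, if_neg (by omega)]

lemma two_pow_mul_succ_le {s m d : ℕ} (hd : 2 ^ s * d < 2 ^ m) (hs : s ≤ m) :
    2 ^ s * (d + 1) ≤ 2 ^ m := by
  rw [← Nat.add_sub_cancel' hs, pow_add] at hd ⊢
  exact Nat.mul_le_mul_left _ (Nat.lt_of_mul_lt_mul_left hd)

lemma add_two_pow_lt_two_pow {i j m : ℕ} (hi : i < 2 ^ m) (hij : i.testBit j = false)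
    (hj : j < m) : i + 2 ^ j < 2 ^ m := by
  have hc : i / 2 ^ j % 2 = 0 := by simpa [Nat.testBit_eq_decide_div_mod_eq] using hij
  have h₁ : 2 ^ (j + 1) * (i / 2 ^ j / 2) = 2 ^ j * (i / 2 ^ j) := by
    rw [pow_succ, mul_assoc, Nat.mul_div_cancel' (Nat.dvd_of_mod_eq_zero hc)]
  have h₂ : 2 ^ (j + 1) * (i / 2 ^ j / 2 + 1) = 2 ^ j * (i / 2 ^ j) + 2 * 2 ^ j := by
    rw [mul_add, h₁, pow_succ]; ring
  have h₃ := Nat.div_add_mod i (2 ^ j)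
  have h₄ := Nat.mod_lt i (Nat.two_pow_pos j)
  have := two_pow_mul_succ_le (s := j + 1) (m := m) (d := i / 2 ^ j / 2) (by rw [h₁]; omega)
    (by omega)
  omega

lemma div_two_pow_succ (x t : ℕ) : x / 2 ^ (t + 1) = x / 2 ^ t / 2 := by
  rw [Nat.div_div_eq_div_mul, pow_succ]

lemma div_two_pow_eq_of_le {x y s K : ℕ} (h : x / 2 ^ s = y / 2 ^ s) (hs : s ≤ K) :
    x / 2 ^ K = y / 2 ^ K := by
  rw [← Nat.add_sub_cancel' hs, pow_add, ← Nat.div_div_eq_div_mul, ← Nat.div_div_eq_div_mul, h]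

lemma testBit_eq_of_div_two_pow_eq {x y K : ℕ} (h : x / 2 ^ K = y / 2 ^ K) :
    x.testBit K = y.testBit K := by
  rw [Nat.testBit_eq_decide_div_mod_eq, Nat.testBit_eq_decide_div_mod_eq, h]

lemma testBit_add_two_pow_self {i j : ℕ} (h : i.testBit j = false) :
    (i + 2 ^ j).testBit j = true := by
  rw [add_comm, Nat.testBit_two_pow_add_eq, h, Bool.not_false]

lemma mem_row {m j k : ℕ} {op : ℕ × ℕ × Bool} :
    op ∈ row m j k ↔ ∃ i < 2 ^ m, i.testBit j = false ∧ op = (i, i + 2 ^ j, !i.testBit k) := by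
  simp only [row, List.mem_map, List.mem_filter, List.mem_range, Bool.not_eq_true']
  exact ⟨fun ⟨i, ⟨hi, hij⟩, h⟩ => ⟨i, hi, hij, h.symm⟩,
    fun ⟨i, hi, hij, h⟩ => ⟨i, ⟨hi, hij⟩, h.symm⟩⟩

lemma row_pairwise_disjoint (m j k : ℕ) : (row m j k).Pairwise DisjointOps := by
  refine List.pairwise_map.mpr ((List.nodup_range.filter _).imp_of_mem fun {i i'} hi hi' hne => ?_)
  simp only [List.mem_filter, Bool.not_eq_true', List.mem_range] at hi hi'
  have h := testBit_add_two_pow_self hi.2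
  have h' := testBit_add_two_pow_self hi'.2
  refine ⟨hne, fun he => ?_, fun he => ?_, fun he => hne (by simpa using he)⟩
  · simp only at he; rw [he, h'] at hi; simp at hi
  · simp only at he; rw [← he, h] at hi'; simp at hi'

lemma runOps_row_apply (v : ℕ → α) {m j k i : ℕ} (hi : i < 2 ^ m) (hij : i.testBit j = false) :
    runOps (row m j k) v i =
        firstOf (!i.testBit k) (v i) (v (i + 2 ^ j)) ∧
      runOps (row m j k) v (i + 2 ^ j) = firstOf (i.testBit k) (v i) (v (i + 2 ^ j)) := by
  have hop : (i, i + 2 ^ j, !i.testBit k) ∈ row m j k := mem_row.mpr ⟨i, hi, hij, rfl⟩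
  have hne : i + 2 ^ j ≠ i := by have := Nat.two_pow_pos j; omega
  rw [runOps_apply_of_pairwise_disjoint (row_pairwise_disjoint m j k) v hop _ (.inl rfl),
    runOps_apply_of_pairwise_disjoint (row_pairwise_disjoint m j k) v hop _ (.inr rfl)]
  simp [cex]

lemma mem_bitonicPairs {m : ℕ} {op : ℕ × ℕ × Bool} (h : op ∈ bitonicPairs m) :
    op.1 < 2 ^ m ∧ op.2.1 < 2 ^ m ∧ op.1 ≠ op.2.1 := by
  simp only [bitonicPairs_eq_stages, stages, mergeRows, List.mem_flatMap, List.mem_range,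
    List.mem_reverse] at h
  obtain ⟨k, hk, j, hj, hop⟩ := h
  obtain ⟨i, hi, hij, rfl⟩ := mem_row.mp hop
  have := Nat.two_pow_pos j
  exact ⟨hi, add_two_pow_lt_two_pow hi hij (by omega), by simp only; omega⟩

lemma runOps_row_block (v : ℕ → α) {m t K d r : ℕ} (hd : 2 ^ (t + 1) * d < 2 ^ m) (htK : t < K)
    (hKm : K ≤ m) (hr : r < 2 ^ t) :
    runOps (row m t K) v (2 ^ (t + 1) * d + r) =
        firstOf (!d.testBit (K - (t + 1)))
          (v (2 ^ (t + 1) * d + r)) (v (2 ^ (t + 1) * d + (r + 2 ^ t))) ∧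
      runOps (row m t K) v (2 ^ (t + 1) * d + (r + 2 ^ t)) =
        firstOf (d.testBit (K - (t + 1)))
          (v (2 ^ (t + 1) * d + r)) (v (2 ^ (t + 1) * d + (r + 2 ^ t))) := by
  have hr' : r < 2 ^ (t + 1) := hr.trans (Nat.pow_lt_pow_right (by norm_num) (by omega))
  have hlt : 2 ^ (t + 1) * d + r < 2 ^ m := by
    have := two_pow_mul_succ_le hd (by omega)
    rw [mul_add, mul_one] at this
    omega
  have hbit : (2 ^ (t + 1) * d + r).testBit t = false := by
    rw [Nat.testBit_two_pow_mul_add _ hr', if_pos (by omega), Nat.testBit_lt_two_pow hr]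
  have hdir := testBit_two_pow_mul_add_of_le d hr' (K := K) (by omega)
  have := runOps_row_apply v (k := K) hlt hbit
  rwa [hdir, add_assoc] at this

lemma runOps_row_between (v : ℕ → α) {m t K p : ℕ} (htm : t < m) (hp : p < 2 ^ m) :
    ∃ p' < 2 ^ m, p' / 2 ^ (t + 1) = p / 2 ^ (t + 1) ∧
      min (v p) (v p') ≤ runOps (row m t K) v p ∧ runOps (row m t K) v p ≤ max (v p) (v p') := by
  have hpos := Nat.two_pow_pos t
  rcases hbit : p.testBit t
  · have hc : p / 2 ^ t % 2 = 0 := by simpa [Nat.testBit_eq_decide_div_mod_eq] using hbit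
    have hdiv := Nat.add_div_right p hpos
    refine ⟨p + 2 ^ t, add_two_pow_lt_two_pow hp hbit htm, ?_, ?_⟩
    · rw [div_two_pow_succ, div_two_pow_succ, hdiv]; omega
    · rw [(runOps_row_apply v hp hbit).1]
      exact ⟨min_le_firstOf _ _ _, firstOf_le_max _ _ _⟩
  · have hc : p / 2 ^ t % 2 = 1 := by simpa [Nat.testBit_eq_decide_div_mod_eq] using hbit
    have hle : 2 ^ t ≤ p := by
      by_contra h
      rw [Nat.div_eq_of_lt (not_le.mp h)] at hc
      simp at hc
    obtain ⟨i, rfl⟩ : ∃ i, p = i + 2 ^ t := ⟨p - 2 ^ t, by omega⟩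
    have hdiv := Nat.add_div_right i hpos
    have hi : i.testBit t = false := by
      simp only [Nat.testBit_eq_decide_div_mod_eq, decide_eq_false_iff_not]
      omega
    refine ⟨i, by omega, ?_, ?_⟩
    · rw [div_two_pow_succ, div_two_pow_succ, hdiv]; omega
    · rw [(runOps_row_apply v (by omega) hi).2, min_comm, max_comm]
      exact ⟨min_le_firstOf _ _ _, firstOf_le_max _ _ _⟩

/-- The bitonic 0-1 sequences `0^a 1^(b-a) 0^(N-b)` and `1^a 0^(b-a) 1^(N-b)`, told apart by the
flip `c`. -/
def IsBitonic (w : ℕ → Bool) (N : ℕ) : Prop :=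
  ∃ c a b, ∀ r < N, w r = (c ^^ decide (a ≤ r ∧ r < b))

lemma IsBitonic.congr {w w' : ℕ → Bool} {N : ℕ} (hw : IsBitonic w N) (h : ∀ r < N, w r = w' r) :
    IsBitonic w' N := by
  obtain ⟨c, a, b, hw⟩ := hw
  exact ⟨c, a, b, fun r hr => (h r hr).symm.trans (hw r hr)⟩

lemma IsBitonic.mono {w : ℕ → Bool} {N N' : ℕ} (hw : IsBitonic w N) (hN : N' ≤ N) :
    IsBitonic w N' := by
  obtain ⟨c, a, b, hw⟩ := hw
  exact ⟨c, a, b, fun r hr => hw r (by omega)⟩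

lemma IsBitonic.not {w : ℕ → Bool} {N : ℕ} (hw : IsBitonic w N) : IsBitonic (fun r => !w r) N := by
  obtain ⟨c, a, b, hw⟩ := hw
  exact ⟨!c, a, b, fun r hr => by simp [hw r hr]⟩

lemma isBitonic_interval_and (a b n : ℕ) :
    IsBitonic (fun r => decide (a ≤ r ∧ r < b) && decide (a ≤ r + n ∧ r + n < b)) n :=
  ⟨false, a, b - n, fun r _ => by
    simp only [Bool.false_xor, ← Bool.decide_and, decide_eq_decide]
    omega⟩

lemma isBitonic_interval_or (a b n : ℕ) :
    IsBitonic (fun r => decide (a ≤ r ∧ r < b) || decide (a ≤ r + n ∧ r + n < b)) n := by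
  by_cases hb : b ≤ n
  · refine ⟨false, a, b, fun r _ => ?_⟩
    simp only [Bool.false_xor, ← Bool.decide_or, decide_eq_decide]
    omega
  by_cases ha : n ≤ a
  · refine ⟨false, a - n, b - n, fun r hr => ?_⟩
    simp only [Bool.false_xor, ← Bool.decide_or, decide_eq_decide]
    omega
  · refine ⟨true, b - n, a, fun r hr => ?_⟩
    simp only [Bool.true_xor, ← Bool.decide_or, ← decide_not, decide_eq_decide]
    omega

lemma IsBitonic.halfClean {w : ℕ → Bool} {n : ℕ} (hw : IsBitonic w (2 * n)) :
    (∀ asc : Bool, IsBitonic (fun r => firstOf asc (w r) (w (r + n))) n) ∧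
    ∀ r < n, ∀ s < n, min (w r) (w (r + n)) ≤ max (w s) (w (s + n)) := by
  obtain ⟨c, a, b, hw⟩ := hw
  have hval : ∀ r < n, w r = (c ^^ decide (a ≤ r ∧ r < b)) ∧
      w (r + n) = (c ^^ decide (a ≤ r + n ∧ r + n < b)) :=
    fun r hr => ⟨hw r (by omega), hw (r + n) (by omega)⟩
  refine ⟨fun asc => ?_, fun r hr s hs => ?_⟩
  · cases c <;> cases asc
    · exact (isBitonic_interval_or a b n).congr fun r hr => by simp [hval r hr, firstOf]
    · exact (isBitonic_interval_and a b n).congr fun r hr => by simp [hval r hr, firstOf]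
    · exact (isBitonic_interval_and a b n).not.congr fun r hr => by simp [hval r hr, firstOf]
    · exact (isBitonic_interval_or a b n).not.congr fun r hr => by simp [hval r hr, firstOf]
  · cases c <;> simp [hval r hr, hval s hs, Bool.le_iff_imp] <;> omega

lemma exists_eq_decide_le_of_monotoneOn {w : ℕ → Bool} {n : ℕ} (hw : MonotoneOn w (Set.Iio n)) :
    ∃ a, ∀ r < n, w r = decide (a ≤ r) := by
  classical
  have hex : ∃ a, a = n ∨ (a < n ∧ w a = true) := ⟨n, .inl rfl⟩
  refine ⟨Nat.find hex, fun r hr => ?_⟩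
  by_cases har : Nat.find hex ≤ r
  · rcases Nat.find_spec hex with ha | ⟨ha, hwa⟩
    · omega
    · have := hw ha hr har
      rw [hwa] at this
      simpa [har, Bool.le_iff_imp] using this
  · have := Nat.find_min hex (not_le.mp har)
    simp_all

lemma isBitonic_of_monotoneOn_antitoneOn {w : ℕ → Bool} {n : ℕ} (h₁ : MonotoneOn w (Set.Iio n))
    (h₂ : AntitoneOn (fun r => w (r + n)) (Set.Iio n)) : IsBitonic w (2 * n) := by
  obtain ⟨a, ha⟩ := exists_eq_decide_le_of_monotoneOn h₁
  obtain ⟨b, hb⟩ := exists_eq_decide_le_of_monotoneOn (w := fun r => !w (r + n)) (n := n)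
    fun x hx y hy hxy => compl_le_compl (h₂ hx hy hxy)
  refine ⟨false, min a n, n + b, fun r hr => ?_⟩
  rcases lt_or_ge r n with hrn | hrn
  · rw [ha r hrn, Bool.false_xor, decide_eq_decide]
    omega
  · have := hb (r - n) (by omega)
    rw [Nat.sub_add_cancel hrn] at this
    rw [Bool.false_xor, ← Bool.not_not (w r), this]
    simp only [← decide_not, decide_eq_decide]
    omega

def Ordered {β : Type*} [LE β] (asc : Bool) (x y : β) : Prop := if asc then x ≤ y else y ≤ x

lemma ordered_refl {β : Type*} [Preorder β] (asc : Bool) (x : β) : Ordered asc x x := by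
  cases asc <;> exact le_rfl

def StageSorted (m K : ℕ) (v : ℕ → Bool) : Prop :=
  ∀ p q, q < 2 ^ m → p / 2 ^ K = q / 2 ^ K → p ≤ q → Ordered (!p.testBit K) (v p) (v q)

/-- The state of stage `K` after its rows `K - 1, …, t`. -/
structure MergeInv (m K t : ℕ) (v : ℕ → Bool) : Prop where
  bitonic : ∀ c, 2 ^ t * c < 2 ^ m → IsBitonic (fun r => v (2 ^ t * c + r)) (2 ^ t)
  ordered : ∀ p q, q < 2 ^ m → p / 2 ^ K = q / 2 ^ K → p / 2 ^ t < q / 2 ^ t →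
    Ordered (!p.testBit K) (v p) (v q)

lemma stageSorted_zero (m : ℕ) (v : ℕ → Bool) : StageSorted m 0 v := by
  intro p q _ hpq _
  simp only [pow_zero, Nat.div_one] at hpq
  subst hpq
  exact ordered_refl _ _

lemma StageSorted.le_of_le {m : ℕ} {v : ℕ → Bool} (h : StageSorted m m v) {p q : ℕ} (hpq : p ≤ q)
    (hq : q < 2 ^ m) : v p ≤ v q := by
  have hp : p < 2 ^ m := lt_of_le_of_lt hpq hq
  simpa [Ordered, Nat.testBit_lt_two_pow hp] using
    h p q hq (by rw [Nat.div_eq_of_lt hp, Nat.div_eq_of_lt hq]) hpq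

lemma MergeInv.stageSorted {m K : ℕ} {v : ℕ → Bool} (h : MergeInv m K 0 v) : StageSorted m K v := by
  intro p q hq hK hpq
  rcases hpq.lt_or_eq with hlt | rfl
  · exact h.ordered p q hq hK (by simpa using hlt)
  · exact ordered_refl _ _

lemma StageSorted.mergeInv {m K : ℕ} {v : ℕ → Bool} (h : StageSorted m K v) (hKm : K < m) :
    MergeInv m (K + 1) (K + 1) v := by
  refine ⟨fun c hc => ?_, fun p q _ hK hlt => absurd hK hlt.ne⟩
  have hblock : ∀ e r s, 2 ^ K * e < 2 ^ m → r ≤ s → s < 2 ^ K →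
      Ordered (!e.testBit 0) (v (2 ^ K * e + r)) (v (2 ^ K * e + s)) := by
    intro e r s he hrs hs
    have hlt := two_pow_mul_succ_le he hKm.le
    rw [mul_add, mul_one] at hlt
    have hr : r < 2 ^ K := lt_of_le_of_lt hrs hs
    have := h (2 ^ K * e + r) (2 ^ K * e + s) (by omega)
      (by rw [two_pow_mul_add_div e hr, two_pow_mul_add_div e hs]) (by omega)
    rwa [testBit_two_pow_mul_add_of_le e hr le_rfl, Nat.sub_self] at this
  have hc' := two_pow_mul_succ_le hc (by omega)
  have := Nat.two_pow_pos K
  have e₀ : 2 ^ K * (2 * c) = 2 ^ (K + 1) * c := by ring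
  have e₁ : ∀ r, 2 ^ K * (2 * c + 1) + r = 2 ^ (K + 1) * c + (r + 2 ^ K) := fun r => by ring
  have e₂ : 2 ^ (K + 1) * (c + 1) = 2 ^ K * (2 * c + 1) + 2 ^ K := by ring
  refine (isBitonic_of_monotoneOn_antitoneOn (fun r _ s hs hrs => ?_) (fun r _ s hs hrs => ?_)).mono
    (pow_succ' 2 K).le
  · have := hblock (2 * c) r s (by omega) hrs hs
    simpa [Ordered, e₀] using this
  · have := hblock (2 * c + 1) r s (by omega) hrs hs
    simpa [Ordered, e₁] using this

lemma MergeInv.bitonic_runOps_row {m K t : ℕ} {v : ℕ → Bool} (h : MergeInv m K (t + 1) v)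
    (htK : t < K) (hKm : K ≤ m) {c : ℕ} (hc : 2 ^ t * c < 2 ^ m) :
    IsBitonic (fun r => runOps (row m t K) v (2 ^ t * c + r)) (2 ^ t) := by
  obtain ⟨d, rfl | rfl⟩ := Nat.even_or_odd' c
  · have hd : 2 ^ (t + 1) * d < 2 ^ m := by rwa [pow_succ, mul_assoc]
    obtain ⟨hclean, -⟩ := ((h.bitonic d hd).mono (pow_succ' 2 t).ge).halfClean
    refine (hclean (!d.testBit (K - (t + 1)))).congr fun r hr => ?_
    rw [show 2 ^ t * (2 * d) + r = 2 ^ (t + 1) * d + r by ring,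
      (runOps_row_block v hd htK hKm hr).1]
  · have hd : 2 ^ (t + 1) * d < 2 ^ m := by
      rw [pow_succ, mul_assoc]; exact lt_of_le_of_lt (Nat.mul_le_mul_left _ (by omega)) hc
    obtain ⟨hclean, -⟩ := ((h.bitonic d hd).mono (pow_succ' 2 t).ge).halfClean
    refine (hclean (d.testBit (K - (t + 1)))).congr fun r hr => ?_
    rw [show 2 ^ t * (2 * d + 1) + r = 2 ^ (t + 1) * d + (r + 2 ^ t) by ring,
      (runOps_row_block v hd htK hKm hr).2]

lemma MergeInv.ordered_runOps_row_of_div_lt {m K t : ℕ} {v : ℕ → Bool}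
    (h : MergeInv m K (t + 1) v) (htK : t < K) (hKm : K ≤ m) {p q : ℕ} (hp : p < 2 ^ m)
    (hq : q < 2 ^ m) (hK : p / 2 ^ K = q / 2 ^ K) (hpq : p / 2 ^ (t + 1) < q / 2 ^ (t + 1)) :
    Ordered (!p.testBit K) (runOps (row m t K) v p) (runOps (row m t K) v q) := by
  obtain ⟨p', hp', hpp', hp₁, hp₂⟩ := runOps_row_between v (K := K) (by omega : t < m) hp
  obtain ⟨q', hq', hqq', hq₁, hq₂⟩ := runOps_row_between v (K := K) (by omega : t < m) hq
  have key : ∀ x y, x / 2 ^ (t + 1) = p / 2 ^ (t + 1) → y / 2 ^ (t + 1) = q / 2 ^ (t + 1) →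
      y < 2 ^ m → Ordered (!p.testBit K) (v x) (v y) := by
    intro x y hx hy hy'
    have hxK := div_two_pow_eq_of_le hx (show t + 1 ≤ K by omega)
    have hyK := div_two_pow_eq_of_le hy (show t + 1 ≤ K by omega)
    rw [← testBit_eq_of_div_two_pow_eq hxK]
    exact h.ordered x y hy' (by rw [hxK, hyK, hK]) (by rw [hx, hy]; exact hpq)
  have h₁ := key p q rfl rfl hq
  have h₂ := key p q' rfl hqq' hq'
  have h₃ := key p' q hpp' rfl hq
  have h₄ := key p' q' hpp' hqq' hq'
  unfold Ordered at *
  generalize (!p.testBit K) = asc at *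
  cases asc
  · simp only [Bool.false_eq_true, if_false] at *
    exact hq₂.trans ((max_le (le_min h₁ h₃) (le_min h₂ h₄)).trans hp₁)
  · simp only [if_true] at *
    exact hp₂.trans ((max_le (le_min h₁ h₂) (le_min h₃ h₄)).trans hq₁)

lemma MergeInv.ordered_runOps_row_of_div_eq {m K t : ℕ} {v : ℕ → Bool}
    (h : MergeInv m K (t + 1) v) (htK : t < K) (hKm : K ≤ m) {p q : ℕ} (hp : p < 2 ^ m)
    (hpq : p / 2 ^ (t + 1) = q / 2 ^ (t + 1)) (hlt : p / 2 ^ t < q / 2 ^ t) :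
    Ordered (!p.testBit K) (runOps (row m t K) v p) (runOps (row m t K) v q) := by
  have hP := div_two_pow_succ p t
  have hQ := div_two_pow_succ q t
  set d := p / 2 ^ (t + 1)
  have hr := Nat.mod_lt p (Nat.two_pow_pos t)
  have hs := Nat.mod_lt q (Nat.two_pow_pos t)
  have hpd : p = 2 ^ (t + 1) * d + p % 2 ^ t := by
    have := Nat.div_add_mod p (2 ^ t)
    rw [show p / 2 ^ t = 2 * d by omega] at this
    rw [show 2 ^ (t + 1) * d = 2 ^ t * (2 * d) by ring]; omega
  have hqd : q = 2 ^ (t + 1) * d + (q % 2 ^ t + 2 ^ t) := by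
    have := Nat.div_add_mod q (2 ^ t)
    rw [show q / 2 ^ t = 2 * d + 1 by omega,
      show 2 ^ t * (2 * d + 1) = 2 ^ (t + 1) * d + 2 ^ t by ring] at this
    omega
  have hd : 2 ^ (t + 1) * d < 2 ^ m := by rw [hpd] at hp; omega
  obtain ⟨-, hord⟩ := ((h.bitonic d hd).mono (pow_succ' 2 t).ge).halfClean
  have hdir := testBit_two_pow_mul_add_of_le d
    (hr.trans (Nat.pow_lt_pow_right (by norm_num) (by omega))) (show t + 1 ≤ K by omega)
  rw [hpd, hqd, (runOps_row_block v hd htK hKm hr).1, (runOps_row_block v hd htK hKm hs).2, hdir]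
  unfold Ordered
  cases d.testBit (K - (t + 1)) <;>
    simp only [firstOf, Bool.not_false, Bool.not_true, if_true, if_false, Bool.false_eq_true]
  · exact hord _ hr _ hs
  · exact hord _ hs _ hr

lemma MergeInv.runOps_row {m K t : ℕ} {v : ℕ → Bool} (h : MergeInv m K (t + 1) v) (htK : t < K)
    (hKm : K ≤ m) : MergeInv m K t (runOps (row m t K) v) := by
  refine ⟨fun c hc => h.bitonic_runOps_row htK hKm hc, fun p q hq hK hlt => ?_⟩
  have hp : p < 2 ^ m := (Nat.lt_of_div_lt_div hlt).trans hq
  have hle : p / 2 ^ (t + 1) ≤ q / 2 ^ (t + 1) := by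
    rw [div_two_pow_succ, div_two_pow_succ]; exact Nat.div_le_div_right hlt.le
  rcases hle.lt_or_eq with hpq | hpq
  · exact h.ordered_runOps_row_of_div_lt htK hKm hp hq hK hpq
  · exact h.ordered_runOps_row_of_div_eq htK hKm hp hpq hlt

lemma MergeInv.stageSorted_runOps_mergeRows {m K : ℕ} (hKm : K ≤ m) :
    ∀ {t : ℕ} {v : ℕ → Bool}, t ≤ K → MergeInv m K t v →
      StageSorted m K (runOps (mergeRows m K t) v)
  | 0, _, _, h => h.stageSorted
  | t + 1, _, htK, h => by
    rw [mergeRows_succ, runOps_append]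
    exact MergeInv.stageSorted_runOps_mergeRows hKm (by omega) (h.runOps_row htK hKm)

lemma stageSorted_runOps_stages (v : ℕ → Bool) {m : ℕ} :
    ∀ {K : ℕ}, K ≤ m → StageSorted m K (runOps (stages m K) v)
  | 0, _ => stageSorted_zero m _
  | K + 1, hKm => by
    rw [stages_succ, runOps_append]
    exact MergeInv.stageSorted_runOps_mergeRows hKm le_rfl
      ((stageSorted_runOps_stages v (by omega)).mergeInv hKm)

/-- The 0-1 principle, applied to the threshold at the output value at `p`. -/
lemma runOps_bitonicPairs_le (v : ℕ → α) {m p q : ℕ} (hpq : p ≤ q) (hq : q < 2 ^ m) :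
    runOps (bitonicPairs m) v p ≤ runOps (bitonicPairs m) v q := by
  set f : α → Bool := fun x => decide (runOps (bitonicPairs m) v p ≤ x)
  have hf : Monotone f := fun x y hxy => by
    simpa [f, Bool.le_iff_imp] using fun h => h.trans hxy
  have := (stageSorted_runOps_stages (f ∘ v) le_rfl).le_of_le hpq hq
  rw [← bitonicPairs_eq_stages, ← hf.comp_runOps] at this
  simpa [f, Bool.le_iff_imp] using this

end BitonicNetwork

open BitonicNetwork

/-- Batcher's bitonic sorting network on `2^m` positions sorts: applied to any
list of length `2^m` over a linearly ordered type, it yields a permutation of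
the list sorted in non-decreasing order; moreover, the sequence of position
pairs at which compare-exchanges are performed depends only on `m` and not on
the contents of the list. -/
theorem bitonic_network_sorts {α : Type*} [LinearOrder α] (m : ℕ)
    (l : List α) (hl : l.length = 2 ^ m) :
    ((runNetwork m l).1).Perm l ∧
      ((runNetwork m l).1).Pairwise (· ≤ ·) ∧
      ∀ l' : List α, l'.length = 2 ^ m →
        (runNetwork m l).2 = (runNetwork m l').2 := by
  have hops : ∀ op ∈ bitonicPairs m, op.1 < l.length ∧ op.2.1 < l.length ∧ op.1 ≠ op.2.1 :=
    fun op h => hl ▸ mem_bitonicPairs h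
  refine ⟨?_, ?_, fun l' _ => by rw [runNetwork_eq, runNetwork_eq]⟩
  · rw [runNetwork_eq]
    exact foldl_cexList_perm (fun op h => (hops op h).2.2) l
  · rw [runNetwork_eq, List.pairwise_iff_getElem]
    intro i j hi hj hij
    have hj' : j < 2 ^ m := by rwa [length_foldl_cexList, hl] at hj
    have := runOps_bitonicPairs_le (l.getD · l[0]) hij.le hj'
    rw [← getD_foldl_cexList hops] at this
    simpa only [List.getD_eq_getElem _ _ hi, List.getD_eq_getElem _ _ hj] using this
end
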